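/- arXiv:1403.5532 — 4 statements merged into one kernel-verified Lean document; each statement's English description precedes it below -/
import Mathlib

section
/- If f : [0,∞) → ℝ ∪ {+∞} is bounded from below and satisfies f(x) ≥ c·log x for some c > 0 and all sufficiently large x, then for any bounded g : [0,∞) → ℝ and any α > 0, there exist constants C, M, m₀ > 0 such that for all m ≥ m₀ and all n ≥ 1, |Σ_{k=0}^∞ e^{-m f(k/n^α)} g(k/n^α)| ≤ C · n^M · e^{-m f̄}, where f̄ = inf_{x ≥ 0} f(x). -/
/-!
Write `f̄` for the infimum of `f` on `[0, ∞)` and fix `m₀ = 2 / c`. Since `f ≥ f̄`, for `m ≥ m₀`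
we have `e^{-m f} ≤ e^{-m f̄} e^{m₀ f̄} e^{-m₀ f}`, so all dependence on `m` sits in the factor
`e^{-m f̄}`. The growth `f(x) ≥ c log x` makes `e^{-m₀ f(x)} ≤ x⁻²` for large `x`, hence
`e^{-m₀ f(x)} ≤ K / (1 + x)²` on `[0, ∞)`. Sampling at `x = k / N` with `N = n^α ≥ 1` gives
`1 / (1 + k / N)² ≤ N² / (k + 1)²`, and summing over `k` yields the bound with `M = 2α`.
-/

open Real Filter

lemma hasSum_one_div_nat_add_one_sq :
    HasSum (fun k : ℕ => 1 / ((k : ℝ) + 1) ^ 2) (π ^ 2 / 6) := by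
  simpa using (hasSum_nat_add_iff' 1).2 hasSum_zeta_two

lemma one_div_one_add_div_sq_le {N : ℝ} (hN : 1 ≤ N) (k : ℕ) :
    1 / (1 + k / N) ^ 2 ≤ N ^ 2 * (1 / ((k : ℝ) + 1) ^ 2) := by
  have hN0 : 0 < N := one_pos.trans_le hN
  calc 1 / (1 + k / N) ^ 2 = N ^ 2 / (N + k) ^ 2 := by field_simp
    _ ≤ N ^ 2 / ((k : ℝ) + 1) ^ 2 := by gcongr N ^ 2 / ?_ ^ 2; linarith
    _ = N ^ 2 * (1 / ((k : ℝ) + 1) ^ 2) := by ring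

lemma abs_tsum_le_of_abs_le_div_one_add_sq {F : ℝ → ℝ} {K N : ℝ} (hN : 1 ≤ N)
    (hF : ∀ x, 0 ≤ x → |F x| ≤ K / (1 + x) ^ 2) :
    |∑' k : ℕ, F (k / N)| ≤ K * N ^ 2 * (π ^ 2 / 6) := by
  have hK : 0 ≤ K := by simpa using (abs_nonneg _).trans (hF 0 le_rfl)
  refine tsum_of_norm_bounded (f := fun k : ℕ => F (k / N))
    (hasSum_one_div_nat_add_one_sq.mul_left (K * N ^ 2)) fun k => ?_
  calc ‖F (k / N)‖ ≤ K * (1 / (1 + k / N) ^ 2) := by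
        rw [Real.norm_eq_abs, mul_one_div]
        exact hF _ (by positivity)
    _ ≤ K * (N ^ 2 * (1 / ((k : ℝ) + 1) ^ 2)) :=
        mul_le_mul_of_nonneg_left (one_div_one_add_div_sq_le hN k) hK
    _ = K * N ^ 2 * (1 / ((k : ℝ) + 1) ^ 2) := by ring

lemma exists_mul_exp_neg_le_of_log_le {f : ℝ → ℝ} {B c x₁ : ℝ} (hc : 0 < c)
    (hbd : ∀ x : ℝ, 0 ≤ x → B ≤ f x) (hlog : ∀ x : ℝ, x₁ ≤ x → c * log x ≤ f x) :
    ∃ K, ∀ x, 0 ≤ x → (1 + x) ^ 2 * exp (-(2 / c) * f x) ≤ K := by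
  set x₂ := max x₁ 1
  refine ⟨max 4 ((1 + x₂) ^ 2 * exp (-(2 / c) * B)), fun x hx => ?_⟩
  rcases lt_or_ge x x₂ with hx₂ | hx₂
  · refine le_max_of_le_right (mul_le_mul ?_ ?_ (by positivity) (by positivity))
    · gcongr
    · exact exp_le_exp.2 (mul_le_mul_of_nonpos_left (hbd x hx) (neg_nonpos.2 (by positivity)))
  · have hx1 : 1 ≤ x := (le_max_right _ _).trans hx₂
    have hx0 : 0 < x := one_pos.trans_le hx1
    have hdecay : x ^ 2 * exp (-(2 / c) * f x) ≤ 1 := by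
      have hf : -(2 / c) * f x ≤ -(2 * log x) := by
        have := hlog x ((le_max_left _ _).trans hx₂)
        rw [neg_mul, neg_le_neg_iff, div_mul_eq_mul_div, le_div_iff₀ hc]
        nlinarith
      calc x ^ 2 * exp (-(2 / c) * f x) ≤ x ^ 2 * exp (-(2 * log x)) := by gcongr
        _ = 1 := by
          rw [exp_neg, show 2 * log x = log (x ^ 2) by simp [log_pow], exp_log (by positivity),
            mul_inv_cancel₀ (by positivity)]
    refine le_max_of_le_left ?_
    calc (1 + x) ^ 2 * exp (-(2 / c) * f x) ≤ 4 * (x ^ 2 * exp (-(2 / c) * f x)) := by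
          rw [← mul_assoc]; gcongr; nlinarith
      _ ≤ 4 := by linarith

lemma abs_exp_neg_mul_mul_le {m m₀ a u v G K w : ℝ} (hm : m₀ ≤ m) (hu : a ≤ u) (hv : |v| ≤ G)
    (hw : 0 < w) (hK : w * exp (-m₀ * u) ≤ K) :
    |exp (-m * u) * v| ≤ G * K * exp (m₀ * a) * exp (-m * a) / w := by
  have hsplit : exp (-m * u) ≤ exp (-m * a) * exp (m₀ * a) * exp (-m₀ * u) := by
    rw [← exp_add, ← exp_add, exp_le_exp]
    nlinarith
  have hG : 0 ≤ G := (abs_nonneg v).trans hv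
  rw [abs_mul, abs_of_pos (exp_pos _), le_div_iff₀ hw]
  calc exp (-m * u) * |v| * w ≤ exp (-m * a) * exp (m₀ * a) * exp (-m₀ * u) * G * w := by
        gcongr
    _ = exp (-m * a) * exp (m₀ * a) * G * (w * exp (-m₀ * u)) := by ring
    _ ≤ exp (-m * a) * exp (m₀ * a) * G * K := by gcongr
    _ = G * K * exp (m₀ * a) * exp (-m * a) := by ring

theorem admissibility_criterion (f g : ℝ → ℝ) (B G c x₁ : ℝ) (hc : 0 < c)
    (hbd : ∀ x : ℝ, 0 ≤ x → B ≤ f x)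
    (hlog : ∀ x : ℝ, x₁ ≤ x → c * Real.log x ≤ f x)
    (hg : ∀ x : ℝ, 0 ≤ x → |g x| ≤ G)
    (α : ℝ) (hα : 0 < α) :
    ∃ C M m₀ : ℝ, 0 < C ∧ 0 < M ∧ 0 < m₀ ∧
      ∀ m : ℝ, m₀ ≤ m → ∀ n : ℕ, 1 ≤ n →
        |∑' k : ℕ, Real.exp (-m * f ((k : ℝ) / (n : ℝ) ^ α)) * g ((k : ℝ) / (n : ℝ) ^ α)|
          ≤ C * (n : ℝ) ^ M * Real.exp (-m * sInf (f '' Set.Ici 0)) := by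
  obtain ⟨K, hK⟩ := exists_mul_exp_neg_le_of_log_le hc hbd hlog
  set fbar := sInf (f '' Set.Ici 0)
  have hfbar : ∀ x, 0 ≤ x → fbar ≤ f x := fun x hx =>
    csInf_le ⟨B, by rintro _ ⟨y, hy, rfl⟩; exact hbd y hy⟩ ⟨x, hx, rfl⟩
  have hG : 0 ≤ G := (abs_nonneg _).trans (hg 0 le_rfl)
  have hK0 : 0 ≤ K := (mul_nonneg (sq_nonneg _) (exp_pos _).le).trans (hK 0 le_rfl)
  set D := G * K * exp (2 / c * fbar)
  refine ⟨D * (π ^ 2 / 6) + 1, 2 * α, 2 / c, by positivity, by positivity, by positivity, ?_⟩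
  intro m hm n hn
  have hterm : ∀ x, 0 ≤ x → |exp (-m * f x) * g x| ≤ D * exp (-m * fbar) / (1 + x) ^ 2 :=
    fun x hx => abs_exp_neg_mul_mul_le hm (hfbar x hx) (hg x hx) (by positivity) (hK x hx)
  have hN : 1 ≤ (n : ℝ) ^ α := one_le_rpow (by exact_mod_cast hn) hα.le
  have hN2 : ((n : ℝ) ^ α) ^ 2 = (n : ℝ) ^ (2 * α) := by
    rw [← rpow_natCast, ← rpow_mul (by positivity), mul_comm]; norm_num
  calc _ ≤ D * exp (-m * fbar) * ((n : ℝ) ^ α) ^ 2 * (π ^ 2 / 6) :=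
        abs_tsum_le_of_abs_le_div_one_add_sq (F := fun x => exp (-m * f x) * g x) hN hterm
    _ ≤ (D * (π ^ 2 / 6) + 1) * (n : ℝ) ^ (2 * α) * exp (-m * fbar) := by
        rw [hN2]
        have : 0 < (n : ℝ) ^ (2 * α) * exp (-m * fbar) := by positivity
        nlinarith
end

section
/- Let γ, x₀ > 0 and 0 < α < 1/2. Then the Gaussian sum Q(n,α,γ,x₀) = n^{1-α} Σ_{k∈ℤ} e^{-n^{1-2α} γ (k - n^α x₀)²} satisfies Q(n,α,γ,x₀) = n^{1-α} ( e^{-γ n^{1-2α} t(n^α x₀)²} + e^{-γ n^{1-2α} (1 - t(n^α x₀))²} + O(e^{-γ n^{1-2α}}) ), where t(x) = min(x - ⌊x⌋, ⌈x⌉ - x) is the distance from x to the nearest integer. -/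
/-! With `c = γ n^{1-2α} → ∞`, the sum `∑ₖ exp (-c (k - y)²)` is unchanged when `y` is replaced by
its fractional part `f`, and the terms `k = 0, 1` give the two main terms, since `{f, 1 - f}` is
`{t(y), 1 - t(y)}`. Every other term sits at distance at least `m + 1` from the centre for some
`m : ℕ`, with at most two terms per `m`, and `exp (-c (m+1)²) ≤ exp (-c)^(m+1)`, so the remaining
terms add up to at most `4 exp (-c)` once `exp (-c) ≤ 1/2`. -/

open Real Filter Asymptotics

/-- The distance from `x` to the nearest integer:
the positive triangular wave of height `1/2` and period `1`. -/
noncomputable def tdist (x : ℝ) : ℝ := min (x - ⌊x⌋) (⌈x⌉ - x)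

lemma tdist_eq_fract_or_one_sub_fract (y : ℝ) :
    tdist y = Int.fract y ∨ tdist y = 1 - Int.fract y := by
  rw [tdist, Int.self_sub_floor]
  rcases eq_or_ne (Int.fract y) 0 with h | h
  · rw [Int.fract_eq_zero_iff] at h
    obtain ⟨z, rfl⟩ := h
    simp
  · rw [Int.ceil_sub_self_eq h]
    exact min_choice _ _

lemma exp_tdist_add_exp_one_sub_tdist (c y : ℝ) :
    exp (-c * tdist y ^ 2) + exp (-c * (1 - tdist y) ^ 2)
      = exp (-c * Int.fract y ^ 2) + exp (-c * (1 - Int.fract y) ^ 2) := by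
  rcases tdist_eq_fract_or_one_sub_fract y with h | h <;> rw [h]
  rw [sub_sub_cancel, add_comm]

lemma tsum_int_comp_sub_eq_comp_sub_fract (g : ℝ → ℝ) (y : ℝ) :
    ∑' k : ℤ, g (k - y) = ∑' k : ℤ, g (k - Int.fract y) := by
  rw [← (Equiv.addRight ⌊y⌋).tsum_eq]
  congr 1 with k
  rw [Equiv.coe_addRight, Int.cast_add, Int.fract]
  ring_nf

lemma summable_geometric_succ {r : ℝ} (hr0 : 0 ≤ r) (hr1 : r < 1) :
    Summable fun m : ℕ => r ^ (m + 1) := by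
  simpa only [pow_succ] using (summable_geometric_of_lt_one hr0 hr1).mul_right r

lemma tsum_geometric_succ_le {r : ℝ} (hr0 : 0 ≤ r) (hr : r ≤ 1 / 2) :
    ∑' m : ℕ, r ^ (m + 1) ≤ 2 * r := by
  have hr1 : r < 1 := by linarith
  simp_rw [pow_succ]
  rw [tsum_mul_right, tsum_geometric_of_lt_one hr0 hr1, ← div_eq_inv_mul,
    div_le_iff₀ (by linarith)]
  nlinarith

lemma abs_tsum_int_sub_le_of_tails_le {G : ℤ → ℝ} {r : ℝ} (hG : ∀ k, 0 ≤ G k)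
    (hr0 : 0 ≤ r) (hr : r ≤ 1 / 2)
    (hpos : ∀ m : ℕ, G (m + 2) ≤ r ^ (m + 1)) (hneg : ∀ m : ℕ, G (-(m + 1)) ≤ r ^ (m + 1)) :
    |∑' k, G k - (G 0 + G 1)| ≤ 4 * r := by
  have hgeom := summable_geometric_succ hr0 (by linarith)
  have hpos_sum : Summable fun m : ℕ => G (m + 2) :=
    .of_nonneg_of_le (fun _ => hG _) hpos hgeom
  have hneg_sum : Summable fun m : ℕ => G (-(m + 1)) :=
    .of_nonneg_of_le (fun _ => hG _) hneg hgeom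
  have hnat_sum : Summable fun m : ℕ => G m :=
    (summable_nat_add_iff 2).mp (by exact_mod_cast hpos_sum)
  have hsplit : ∑' k, G k - (G 0 + G 1) = ∑' m : ℕ, G (m + 2) + ∑' m : ℕ, G (-(m + 1)) := by
    rw [tsum_of_nat_of_neg_add_one hnat_sum hneg_sum, ← hnat_sum.sum_add_tsum_nat_add 2]
    simp only [Finset.sum_range_succ, Finset.sum_range_zero]
    push_cast
    ring
  have hpos_le := (hpos_sum.tsum_le_tsum hpos hgeom).trans (tsum_geometric_succ_le hr0 hr)
  have hneg_le := (hneg_sum.tsum_le_tsum hneg hgeom).trans (tsum_geometric_succ_le hr0 hr)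
  rw [hsplit, abs_of_nonneg (add_nonneg (tsum_nonneg fun _ => hG _) (tsum_nonneg fun _ => hG _))]
  linarith

lemma exp_neg_mul_sq_le_pow {c t : ℝ} (hc : 0 ≤ c) (m : ℕ) (ht : m + 1 ≤ |t|) :
    exp (-c * t ^ 2) ≤ exp (-c) ^ (m + 1) := by
  rw [← exp_nat_mul, exp_le_exp, ← sq_abs]
  have : (m + 1 : ℝ) ≤ |t| ^ 2 := by nlinarith
  push_cast
  nlinarith

lemma abs_tsum_exp_neg_mul_sq_sub_le {c : ℝ} (hc : 1 ≤ c) (y : ℝ) :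
    |∑' k : ℤ, exp (-c * ((k : ℝ) - y) ^ 2)
        - (exp (-c * tdist y ^ 2) + exp (-c * (1 - tdist y) ^ 2))| ≤ 4 * exp (-c) := by
  have hf0 := Int.fract_nonneg y
  have hf1 := Int.fract_lt_one y
  have hr : exp (-c) ≤ 1 / 2 :=
    (exp_le_exp.mpr (by linarith)).trans exp_neg_one_lt_half.le
  rw [exp_tdist_add_exp_one_sub_tdist,
    tsum_int_comp_sub_eq_comp_sub_fract (fun t => exp (-c * t ^ 2))]
  convert abs_tsum_int_sub_le_of_tails_le
    (G := fun k : ℤ => exp (-c * ((k : ℝ) - Int.fract y) ^ 2))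
    (fun _ => (exp_pos _).le) (exp_pos _).le hr
    (fun m => exp_neg_mul_sq_le_pow (c := c) (by linarith) m ?_)
    (fun m => exp_neg_mul_sq_le_pow (c := c) (by linarith) m ?_) using 4
  · simp
  · rw [Int.cast_one, ← neg_sub, neg_sq]
  · exact le_abs.mpr (Or.inl (by push_cast; linarith))
  · exact le_abs.mpr (Or.inr (by push_cast; linarith))

theorem gaussian_sum_asymptotics_subcritical_general (γ x₀ α : ℝ)
    (hγ : 0 < γ) (hα : α < 1 / 2) :
    ∃ e : ℕ → ℝ,
      (∀ n : ℕ, 1 ≤ n →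
        (n : ℝ) ^ (1 - α) *
            ∑' k : ℤ, Real.exp (-(n : ℝ) ^ (1 - 2 * α) * γ * ((k : ℝ) - (n : ℝ) ^ α * x₀) ^ 2)
          = (n : ℝ) ^ (1 - α) *
              (Real.exp (-γ * (n : ℝ) ^ (1 - 2 * α) * (tdist ((n : ℝ) ^ α * x₀)) ^ 2)
                + Real.exp (-γ * (n : ℝ) ^ (1 - 2 * α) * (1 - tdist ((n : ℝ) ^ α * x₀)) ^ 2)
                + e n)) ∧
      e =O[atTop] fun n : ℕ => Real.exp (-γ * (n : ℝ) ^ (1 - 2 * α)) := by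
  refine ⟨fun n => ∑' k : ℤ, exp (-(n : ℝ) ^ (1 - 2 * α) * γ * ((k : ℝ) - (n : ℝ) ^ α * x₀) ^ 2)
      - (exp (-γ * (n : ℝ) ^ (1 - 2 * α) * tdist ((n : ℝ) ^ α * x₀) ^ 2)
        + exp (-γ * (n : ℝ) ^ (1 - 2 * α) * (1 - tdist ((n : ℝ) ^ α * x₀)) ^ 2)),
    fun n _ => by ring, .of_bound 4 ?_⟩
  have hscale : Tendsto (fun n : ℕ => γ * (n : ℝ) ^ (1 - 2 * α)) atTop atTop :=
    ((tendsto_rpow_atTop (by linarith)).comp tendsto_natCast_atTop_atTop).const_mul_atTop hγ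
  filter_upwards [hscale.eventually_ge_atTop 1] with n hn
  rw [norm_of_nonneg (exp_pos _).le, norm_eq_abs]
  simpa only [neg_mul, mul_comm γ] using abs_tsum_exp_neg_mul_sq_sub_le hn ((n : ℝ) ^ α * x₀)

theorem gaussian_sum_asymptotics_subcritical (γ x₀ α : ℝ)
    (hγ : 0 < γ) (hx₀ : 0 < x₀) (hα0 : 0 < α) (hα : α < 1 / 2) :
    ∃ e : ℕ → ℝ,
      (∀ n : ℕ, 1 ≤ n →
        (n : ℝ) ^ (1 - α) *
            ∑' k : ℤ, Real.exp (-(n : ℝ) ^ (1 - 2 * α) * γ * ((k : ℝ) - (n : ℝ) ^ α * x₀) ^ 2)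
          = (n : ℝ) ^ (1 - α) *
              (Real.exp (-γ * (n : ℝ) ^ (1 - 2 * α) * (tdist ((n : ℝ) ^ α * x₀)) ^ 2)
                + Real.exp (-γ * (n : ℝ) ^ (1 - 2 * α) * (1 - tdist ((n : ℝ) ^ α * x₀)) ^ 2)
                + e n)) ∧
      e =O[atTop] fun n : ℕ => Real.exp (-γ * (n : ℝ) ^ (1 - 2 * α)) :=
  gaussian_sum_asymptotics_subcritical_general γ x₀ α hγ hα
end

section
/- Let f, g be functions of one real variable with k continuous derivatives. Then the k-th derivative in y of e^{-n f(y)} g(y) has the form (∂^k/∂y^k)[e^{-n f(y)} g(y)] = ( Σ_{l=0}^k n^{k-l} (f'(y))^{max(k-2l,0)} Q_{k,l}(y) ) e^{-n f(y)}, where each Q_{k,l}(y) is a polynomial in f'(y), …, f^{(k)}(y), g(y), …, g^{(k)}(y) with integer coefficients not depending on f, g, or n. -/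
/-!
Write `∂ᵏ(e^{-nf} g) = e^{-nf} ∑ₗ n^{k-l} c_{k,l}`. Since `∂(e^{-nf} F) = e^{-nf} (F' - n f' F)`,
the coefficients obey `c_{k+1,l} = -f' c_{k,l} + c_{k,l-1}'`. By induction, `c_{k,l}` is
`f'^{max(k-2l,0)}` times an integer polynomial in `f', …, f⁽ᵏ⁾, g, …, g⁽ᵏ⁾`: multiplying by `f'`
raises the exponent by one, which is all the first term needs, and differentiating lowers it by at
most one, which matches `max(k+1-2(l+1), 0) = max(k-2l, 0) - 1` for the second term.
-/

open Real MvPolynomial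

namespace DerivativeStructure

noncomputable def jet (k : ℕ) (f g : ℝ → ℝ) (y : ℝ) : Fin k ⊕ Fin (k + 1) → ℝ :=
  Sum.elim (fun i => iteratedDeriv ((i : ℕ) + 1) f y) (fun j => iteratedDeriv (j : ℕ) g y)

variable {k : ℕ}

lemma aeval_jet_rename_castSucc (f g : ℝ → ℝ) (y : ℝ) (P : MvPolynomial (Fin k ⊕ Fin (k + 1)) ℤ) :
    aeval (jet (k + 1) f g y) (rename (Sum.map Fin.castSucc Fin.castSucc) P) =
      aeval (jet k f g y) P := by
  have hjet : jet (k + 1) f g y ∘ Sum.map Fin.castSucc Fin.castSucc = jet k f g y := by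
    funext s
    rcases s with i | j <;> rfl
  rw [aeval_rename, hjet]

lemma hasDerivAt_iteratedDeriv {f : ℝ → ℝ} {N m : ℕ} (hf : ContDiff ℝ N f) (hm : m < N) (y : ℝ) :
    HasDerivAt (iteratedDeriv m f) (iteratedDeriv (m + 1) f y) y := by
  rw [iteratedDeriv_succ]
  exact (hf.differentiable_iteratedDeriv m (by exact_mod_cast hm) y).hasDerivAt

lemma hasDerivAt_jet {f g : ℝ → ℝ} (hf : ContDiff ℝ (k + 1) f) (hg : ContDiff ℝ (k + 1) g)
    (s : Fin k ⊕ Fin (k + 1)) (y : ℝ) :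
    HasDerivAt (fun y => jet k f g y s) (jet (k + 1) f g y (Sum.map Fin.succ Fin.succ s)) y := by
  rcases s with i | j
  · exact hasDerivAt_iteratedDeriv (N := k + 1) (by exact_mod_cast hf) (by omega) y
  · exact hasDerivAt_iteratedDeriv (N := k + 1) (by exact_mod_cast hg) (by omega) y

lemma exists_hasDerivAt_aeval_jet (P : MvPolynomial (Fin k ⊕ Fin (k + 1)) ℤ) :
    ∃ P' : MvPolynomial (Fin (k + 1) ⊕ Fin (k + 2)) ℤ, ∀ f g : ℝ → ℝ,
      ContDiff ℝ (k + 1) f → ContDiff ℝ (k + 1) g → ∀ y,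
        HasDerivAt (fun y => aeval (jet k f g y) P) (aeval (jet (k + 1) f g y) P') y := by
  induction P using MvPolynomial.induction_on with
  | C a => exact ⟨0, fun f g _ _ y => by simpa using hasDerivAt_const y (a : ℝ)⟩
  | add p q hp hq =>
    obtain ⟨p', hp'⟩ := hp
    obtain ⟨q', hq'⟩ := hq
    exact ⟨p' + q', fun f g hf hg y => by simpa using (hp' f g hf hg y).fun_add (hq' f g hf hg y)⟩
  | mul_X p s hp =>
    obtain ⟨p', hp'⟩ := hp
    refine ⟨p' * X (Sum.map Fin.castSucc Fin.castSucc s) +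
      rename (Sum.map Fin.castSucc Fin.castSucc) p * X (Sum.map Fin.succ Fin.succ s),
      fun f g hf hg y => ?_⟩
    simp only [map_mul, aeval_X]
    refine ((hp' f g hf hg y).fun_mul (hasDerivAt_jet hf hg s y)).congr_deriv ?_
    simp only [map_add, map_mul, aeval_X, aeval_jet_rename_castSucc]
    congr 2
    rcases s with i | j <;> rfl

def HasDerivPowFactor (k e : ℕ) (φ : (ℝ → ℝ) → (ℝ → ℝ) → ℝ → ℝ) : Prop :=
  ∃ P : MvPolynomial (Fin k ⊕ Fin (k + 1)) ℤ, ∀ f g : ℝ → ℝ, ContDiff ℝ k f → ContDiff ℝ k g →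
    ∀ y, φ f g y = deriv f y ^ e * aeval (jet k f g y) P

namespace HasDerivPowFactor

variable {e : ℕ} {φ ψ : (ℝ → ℝ) → (ℝ → ℝ) → ℝ → ℝ}

lemma zero : HasDerivPowFactor k e fun _ _ _ => 0 :=
  ⟨0, fun _ _ _ _ _ => by simp⟩

lemma add (hφ : HasDerivPowFactor k e φ) (hψ : HasDerivPowFactor k e ψ) :
    HasDerivPowFactor k e (φ + ψ) := by
  obtain ⟨P, hP⟩ := hφ
  obtain ⟨Q, hQ⟩ := hψ
  exact ⟨P + Q, fun f g hf hg y => by simp [hP f g hf hg y, hQ f g hf hg y, mul_add]⟩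

lemma neg_deriv_mul (hφ : HasDerivPowFactor k e φ) :
    HasDerivPowFactor k (e + 1) (fun f g y => -deriv f y * φ f g y) := by
  obtain ⟨P, hP⟩ := hφ
  exact ⟨-P, fun f g hf hg y => by simp only [hP f g hf hg y, map_neg]; ring⟩

lemma succ (hφ : HasDerivPowFactor k e φ) : HasDerivPowFactor (k + 1) e φ := by
  obtain ⟨P, hP⟩ := hφ
  refine ⟨rename (Sum.map Fin.castSucc Fin.castSucc) P, fun f g hf hg y => ?_⟩
  rw [aeval_jet_rename_castSucc]
  exact hP f g (hf.of_le (by norm_cast; omega)) (hg.of_le (by norm_cast; omega)) y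

lemma mono {e' : ℕ} (hφ : HasDerivPowFactor (k + 1) e φ) (he : e' ≤ e) :
    HasDerivPowFactor (k + 1) e' φ := by
  obtain ⟨P, hP⟩ := hφ
  refine ⟨X (Sum.inl 0) ^ (e - e') * P, fun f g hf hg y => ?_⟩
  have hX : aeval (jet (k + 1) f g y) (X (R := ℤ) (Sum.inl 0)) = deriv f y := by
    simp [jet, iteratedDeriv_one]
  rw [hP f g hf hg y, map_mul, map_pow, hX, ← mul_assoc, ← pow_add, Nat.add_sub_cancel' he]

lemma exists_hasDerivAt (hφ : HasDerivPowFactor k e φ) (he : e ≤ k) :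
    ∃ P' : MvPolynomial (Fin (k + 1) ⊕ Fin (k + 2)) ℤ, ∀ f g : ℝ → ℝ,
      ContDiff ℝ (k + 1) f → ContDiff ℝ (k + 1) g → ∀ y,
        HasDerivAt (φ f g) (deriv f y ^ (e - 1) * aeval (jet (k + 1) f g y) P') y := by
  obtain ⟨P, hP⟩ := hφ
  obtain ⟨P', hP'⟩ := exists_hasDerivAt_aeval_jet P
  have hφ_eq : ∀ f g : ℝ → ℝ, ContDiff ℝ (k + 1) f → ContDiff ℝ (k + 1) g →
      φ f g = fun y => deriv f y ^ e * aeval (jet k f g y) P :=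
    fun f g hf hg => funext (hP f g hf.of_succ hg.of_succ)
  rcases e with _ | e
  · refine ⟨P', fun f g hf hg y => ?_⟩
    simpa [hφ_eq f g hf hg] using hP' f g hf hg y
  · obtain ⟨k, rfl⟩ : ∃ k', k = k' + 1 := ⟨k - 1, by omega⟩
    refine ⟨C (e + 1 : ℤ) * X (Sum.inl 1) * rename (Sum.map Fin.castSucc Fin.castSucc) P +
      X (Sum.inl 0) * P', fun f g hf hg y => ?_⟩
    have hf' : HasDerivAt (deriv f) (iteratedDeriv 2 f y) y := by
      simpa [iteratedDeriv_one] using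
        hasDerivAt_iteratedDeriv (N := k + 2) (m := 1) (by exact_mod_cast hf) (by omega) y
    rw [hφ_eq f g hf hg]
    refine ((hf'.pow (e + 1)).fun_mul (hP' f g hf hg y)).congr_deriv ?_
    simp only [map_add, map_mul, aeval_jet_rename_castSucc]
    simp [jet, iteratedDeriv_one]
    ring

lemma differentiableAt (hφ : HasDerivPowFactor k e φ) (he : e ≤ k) {f g : ℝ → ℝ}
    (hf : ContDiff ℝ (k + 1) f) (hg : ContDiff ℝ (k + 1) g) (y : ℝ) :
    DifferentiableAt ℝ (φ f g) y := by
  obtain ⟨P', hP'⟩ := hφ.exists_hasDerivAt he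
  exact (hP' f g hf hg y).differentiableAt

lemma deriv (hφ : HasDerivPowFactor k e φ) (he : e ≤ k) :
    HasDerivPowFactor (k + 1) (e - 1) (fun f g y => _root_.deriv (φ f g) y) := by
  obtain ⟨P', hP'⟩ := hφ.exists_hasDerivAt he
  exact ⟨P', fun f g hf hg y => (hP' f g hf hg y).deriv⟩

end HasDerivPowFactor

lemma sum_pow_mul_snoc_add_cons {R : Type*} [CommSemiring R] (n : R) (a b : Fin (k + 1) → R) :
    ∑ m : Fin (k + 2), n ^ (k + 1 - (m : ℕ)) *
        ((Fin.snoc a 0 : Fin (k + 2) → R) m + (Fin.cons 0 b : Fin (k + 2) → R) m) =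
      ∑ l : Fin (k + 1), n ^ (k - (l : ℕ)) * (n * a l + b l) := by
  simp only [mul_add, Finset.sum_add_distrib]
  rw [Fin.sum_univ_castSucc (n := k + 1), Fin.sum_univ_succ (n := k + 1)]
  simp only [Fin.snoc_castSucc, Fin.snoc_last, Fin.cons_zero, Fin.cons_succ, Fin.val_castSucc,
    Fin.val_succ, mul_zero, add_zero, zero_add, Nat.add_sub_add_right]
  congr 1
  refine Finset.sum_congr rfl fun l _ => ?_
  rw [Nat.sub_add_comm (Nat.lt_succ_iff.mp l.isLt), pow_succ]
  ring

/-- `Fin.snoc` and `Fin.cons` pad with the vanishing coefficients `c_{k,k+1}` and `c_{k,-1}`. -/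
noncomputable def nextCoeff (c : Fin (k + 1) → (ℝ → ℝ) → (ℝ → ℝ) → ℝ → ℝ) :
    Fin (k + 2) → (ℝ → ℝ) → (ℝ → ℝ) → ℝ → ℝ :=
  fun m => (fun f g y => (Fin.snoc (fun l => -deriv f y * c l f g y) 0 : Fin (k + 2) → ℝ) m) +
    (fun f g y => (Fin.cons 0 (fun l => deriv (c l f g) y) : Fin (k + 2) → ℝ) m)

lemma hasDerivPowFactor_nextCoeff {c : Fin (k + 1) → (ℝ → ℝ) → (ℝ → ℝ) → ℝ → ℝ}
    (hc : ∀ l : Fin (k + 1), HasDerivPowFactor k ((k : ℤ) - 2 * (l : ℕ)).toNat (c l))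
    (m : Fin (k + 2)) :
    HasDerivPowFactor (k + 1) (((k + 1 : ℕ) : ℤ) - 2 * (m : ℕ)).toNat (nextCoeff c m) := by
  refine HasDerivPowFactor.add ?_ ?_
  · induction m using Fin.lastCases with
    | last => simpa using HasDerivPowFactor.zero
    | cast l =>
      simp only [Fin.snoc_castSucc, Fin.val_castSucc]
      exact (hc l).neg_deriv_mul.succ.mono (by omega)
  · induction m using Fin.cases with
    | zero => simpa using HasDerivPowFactor.zero
    | succ l =>
      simp only [Fin.cons_succ, Fin.val_succ]
      exact ((hc l).deriv (by omega)).mono (by omega)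

lemma iteratedDeriv_succ_exp_mul_eq {c : Fin (k + 1) → (ℝ → ℝ) → (ℝ → ℝ) → ℝ → ℝ}
    (hc : ∀ l : Fin (k + 1), HasDerivPowFactor k ((k : ℤ) - 2 * (l : ℕ)).toNat (c l))
    (hk : ∀ f g : ℝ → ℝ, ContDiff ℝ k f → ContDiff ℝ k g → ∀ n y : ℝ,
      iteratedDeriv k (fun t => exp (-n * f t) * g t) y =
        (∑ l : Fin (k + 1), n ^ (k - (l : ℕ)) * c l f g y) * exp (-n * f y))
    {f g : ℝ → ℝ} (hf : ContDiff ℝ (k + 1) f) (hg : ContDiff ℝ (k + 1) g) (n y : ℝ) :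
    iteratedDeriv (k + 1) (fun t => exp (-n * f t) * g t) y =
      (∑ m : Fin (k + 2), n ^ (k + 1 - (m : ℕ)) * nextCoeff c m f g y) * exp (-n * f y) := by
  have hsum : HasDerivAt (fun y => ∑ l : Fin (k + 1), n ^ (k - (l : ℕ)) * c l f g y)
      (∑ l : Fin (k + 1), n ^ (k - (l : ℕ)) * deriv (c l f g) y) y :=
    HasDerivAt.fun_sum fun l _ =>
      (((hc l).differentiableAt (by omega) hf hg y).hasDerivAt).const_mul _
  have hexp : HasDerivAt (fun y => exp (-n * f y)) (exp (-n * f y) * (-n * deriv f y)) y :=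
    ((hf.differentiable (by simp) y).hasDerivAt.const_mul (-n)).exp
  rw [iteratedDeriv_succ, funext (hk f g hf.of_succ hg.of_succ n), (hsum.fun_mul hexp).deriv]
  simp only [nextCoeff, Pi.add_apply, sum_pow_mul_snoc_add_cons, Finset.sum_mul,
    ← Finset.sum_add_distrib]
  exact Finset.sum_congr rfl fun l _ => by ring

lemma exists_coeffs_iteratedDeriv_exp_mul (k : ℕ) :
    ∃ c : Fin (k + 1) → (ℝ → ℝ) → (ℝ → ℝ) → ℝ → ℝ,
      (∀ l : Fin (k + 1), HasDerivPowFactor k ((k : ℤ) - 2 * (l : ℕ)).toNat (c l)) ∧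
      ∀ f g : ℝ → ℝ, ContDiff ℝ k f → ContDiff ℝ k g → ∀ n y : ℝ,
        iteratedDeriv k (fun t => exp (-n * f t) * g t) y =
          (∑ l : Fin (k + 1), n ^ (k - (l : ℕ)) * c l f g y) * exp (-n * f y) := by
  induction k with
  | zero =>
    refine ⟨fun _ _ g y => g y, fun _ => ⟨X (Sum.inr 0), fun f g _ _ y => by simp [jet]⟩, ?_⟩
    intro f g _ _ n y
    simp [mul_comm]
  | succ k ih =>
    obtain ⟨c, hc, hk⟩ := ih
    exact ⟨nextCoeff c, hasDerivPowFactor_nextCoeff hc,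
      fun f g hf hg n y => iteratedDeriv_succ_exp_mul_eq hc hk hf hg n y⟩

end DerivativeStructure

open DerivativeStructure

theorem derivative_structure_lemma (k : ℕ) :
    ∃ Q : Fin (k + 1) → MvPolynomial (Fin k ⊕ Fin (k + 1)) ℤ,
      ∀ f g : ℝ → ℝ, ContDiff ℝ k f → ContDiff ℝ k g → ∀ n : ℝ, ∀ y : ℝ,
        iteratedDeriv k (fun t => Real.exp (-n * f t) * g t) y
          = (∑ l : Fin (k + 1),
                n ^ (k - (l : ℕ)) * (deriv f y) ^ ((k : ℤ) - 2 * (l : ℕ)).toNat *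
                  MvPolynomial.aeval
                    (Sum.elim (fun i : Fin k => iteratedDeriv ((i : ℕ) + 1) f y)
                      (fun j : Fin (k + 1) => iteratedDeriv (j : ℕ) g y)) (Q l))
              * Real.exp (-n * f y) := by
  obtain ⟨c, hc, hformula⟩ := exists_coeffs_iteratedDeriv_exp_mul k
  choose Q hQ using hc
  refine ⟨Q, fun f g hf hg n y => ?_⟩
  rw [hformula f g hf hg n y]
  simp only [hQ _ f g hf hg y, mul_assoc]
  rfl
end

section
/- Let S : [0,1] → ℝ ∪ {+∞} be continuous, three-times differentiable on (0,1), with a single global minimum at x₀ ∈ (0,1) and S''(x) > 0 on (0,1); let L : [0,1] → ℝ be differentiable and never vanishing. Define Γ(z,n) = Σ_{k=0}^n e^{-n S(k/n)} L(k/n) z^k. Then for every z > 0: lim_{n→∞} (log Γ(z,n))/n = sup_{x ∈ [0,1]} ( −S(x) + x log z ), i.e., the exponential growth rate of the generating function is the restricted Legendre–Fenchel transform of S evaluated at log z. -/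
open Real Filter

/-- The generating function of the semiclassical probability distribution
`p_k ∝ e^{-n S(k/n)} L(k/n)` on `{0,…,n}`. -/
noncomputable def genFun (S L : ℝ → ℝ) (z : ℝ) (n : ℕ) : ℝ :=
  ∑ k ∈ Finset.range (n + 1),
    Real.exp (-(n : ℝ) * S ((k : ℝ) / (n : ℝ))) * L ((k : ℝ) / (n : ℝ)) * z ^ k

/-!
Writing `z ^ k = exp (n * (k / n) * log z)` turns `genFun S L z n` into the Laplace sum
`∑ₖ exp (n f(k/n)) L(k/n)` with `f x = -S x + x log z`. Each of its `n + 1` terms is at most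
`exp (n max f) · max |L|`, while the term at the grid point `⌊n x₁⌋ / n` next to a maximiser `x₁`
of `f` is at least `exp (n f(⌊n x₁⌋ / n)) · min |L|`. Taking `(1/n) log` squeezes the growth
rate to `max f`. The sign of `L` does not matter: it is constant by connectedness of `[0,1]`, and
`Real.log` only sees absolute values.
-/

open Set Topology

noncomputable def laplaceSum (f g : ℝ → ℝ) (n : ℕ) : ℝ :=
  ∑ k ∈ Finset.range (n + 1), exp (n * f (k / n)) * g (k / n)

lemma natCast_div_mem_Icc {k n : ℕ} (hk : k ≤ n) : (k : ℝ) / n ∈ Icc (0 : ℝ) 1 :=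
  ⟨by positivity, div_le_one_of_le₀ (by exact_mod_cast hk) n.cast_nonneg⟩

lemma genFun_eq_laplaceSum {S L : ℝ → ℝ} {z : ℝ} (hz : 0 < z) (n : ℕ) :
    genFun S L z n = laplaceSum (fun x => -S x + x * log z) L n := by
  refine Finset.sum_congr rfl fun k hk => ?_
  have hkn : (n : ℝ) * (k / n) = k := by
    rcases n.eq_zero_or_pos with rfl | hn
    · simp_all
    · field_simp
  have hzk : z ^ k = exp (k * log z) := by rw [exp_nat_mul, exp_log hz]
  rw [mul_add, ← mul_assoc, hkn, exp_add, neg_mul_comm, hzk]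
  ring

section LaplaceSum

variable {f g : ℝ → ℝ}

lemma laplaceSum_congr {g' : ℝ → ℝ} (h : EqOn g g' (Icc 0 1)) : laplaceSum f g = laplaceSum f g' :=
  funext fun n => Finset.sum_congr rfl fun k hk => by
    rw [h (natCast_div_mem_Icc (Finset.mem_range_succ_iff.1 hk))]

lemma laplaceSum_neg (n : ℕ) : laplaceSum f (-g) n = -laplaceSum f g n := by
  simp [laplaceSum]

lemma single_le_laplaceSum (hg : ∀ x ∈ Icc (0 : ℝ) 1, 0 ≤ g x) {k n : ℕ} (hk : k ≤ n) :
    exp (n * f (k / n)) * g (k / n) ≤ laplaceSum f g n :=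
  Finset.single_le_sum (f := fun k : ℕ => exp (n * f (k / n)) * g (k / n))
    (fun _ hj => mul_nonneg (exp_pos _).le
      (hg _ (natCast_div_mem_Icc (Finset.mem_range_succ_iff.1 hj))))
    (Finset.mem_range_succ_iff.2 hk)

lemma laplaceSum_le {M C : ℝ} (hf : ∀ x ∈ Icc (0 : ℝ) 1, f x ≤ M)
    (hg : ∀ x ∈ Icc (0 : ℝ) 1, 0 ≤ g x ∧ g x ≤ C) (n : ℕ) :
    laplaceSum f g n ≤ (n + 1) * C * exp (n * M) :=
  calc laplaceSum f g n ≤ ∑ _k ∈ Finset.range (n + 1), exp (n * M) * C := by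
        refine Finset.sum_le_sum fun k hk => ?_
        have hx := natCast_div_mem_Icc (Finset.mem_range_succ_iff.1 hk)
        exact mul_le_mul (exp_le_exp.2 (mul_le_mul_of_nonneg_left (hf _ hx) n.cast_nonneg))
          (hg _ hx).2 (hg _ hx).1 (exp_pos _).le
    _ = (n + 1) * C * exp (n * M) := by simp; ring

lemma le_log_laplaceSum {m : ℝ} (hm : 0 < m) (hg : ∀ x ∈ Icc (0 : ℝ) 1, m ≤ g x) {k n : ℕ}
    (hk : k ≤ n) : n * f (k / n) + log m ≤ log (laplaceSum f g n) := by
  have hsingle := single_le_laplaceSum (f := f) (fun x hx => hm.le.trans (hg x hx)) hk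
  rw [← log_exp (n * f (k / n)), ← log_mul (exp_ne_zero _) hm.ne']
  exact log_le_log (by positivity) ((mul_le_mul_of_nonneg_left
    (hg _ (natCast_div_mem_Icc hk)) (exp_pos _).le).trans hsingle)

lemma log_laplaceSum_le {M C : ℝ} (hf : ∀ x ∈ Icc (0 : ℝ) 1, f x ≤ M)
    (hg : ∀ x ∈ Icc (0 : ℝ) 1, 0 < g x ∧ g x ≤ C) (n : ℕ) :
    log (laplaceSum f g n) ≤ n * M + log ((n + 1) * C) := by
  have hC : 0 < C := let h0 := hg 0 ⟨le_rfl, zero_le_one⟩; h0.1.trans_le h0.2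
  have hpos : 0 < laplaceSum f g n :=
    (mul_pos (exp_pos _) (hg _ (natCast_div_mem_Icc n.zero_le)).1).trans_le
      (single_le_laplaceSum (fun x hx => (hg x hx).1.le) n.zero_le)
  calc log (laplaceSum f g n) ≤ log ((n + 1) * C * exp (n * M)) :=
        log_le_log hpos (laplaceSum_le hf (fun x hx => ⟨(hg x hx).1.le, (hg x hx).2⟩) n)
    _ = n * M + log ((n + 1) * C) := by
        rw [log_mul (by positivity) (exp_ne_zero _), log_exp]; ring

lemma log_laplaceSum_abs (hg : ContinuousOn g (Icc 0 1)) (hg0 : ∀ x ∈ Icc (0 : ℝ) 1, g x ≠ 0)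
    (n : ℕ) : log (laplaceSum f g n) = log (laplaceSum f (fun x => |g x|) n) := by
  rcases isPreconnected_Icc.eq_or_eq_neg_of_sq_eq hg hg.abs (fun x _ => by simp [sq_abs])
      (fun hx => abs_ne_zero.2 (hg0 _ hx)) with h | h
  · rw [laplaceSum_congr h]
  · rw [laplaceSum_congr h, laplaceSum_neg, log_neg_eq_log]

end LaplaceSum

lemma tendsto_log_natCast_add_one_mul_div {c : ℝ} (hc : 0 < c) :
    Tendsto (fun n : ℕ => log ((n + 1) * c) / n) atTop (𝓝 0) := by
  have hlog : Tendsto (fun n : ℕ => log ((n : ℝ) + 1) / n) atTop (𝓝 0) := by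
    have hsucc : Tendsto (fun n : ℕ => (n : ℝ) + 1) atTop atTop :=
      tendsto_natCast_atTop_atTop.atTop_add tendsto_const_nhds
    simpa [Function.comp_def] using
      (tendsto_pow_log_div_mul_add_atTop 1 (-1) 1 one_ne_zero).comp hsucc
  have hsum : Tendsto (fun n : ℕ => log ((n : ℝ) + 1) / n + log c / n) atTop (𝓝 0) := by
    simpa using hlog.add (tendsto_const_div_atTop_nhds_zero_nat (log c))
  refine hsum.congr fun n => ?_
  rw [log_mul (by positivity) hc.ne', add_div]

theorem tendsto_log_laplaceSum_div_of_pos {f g : ℝ → ℝ} (hf : ContinuousOn f (Icc 0 1))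
    (hg : ContinuousOn g (Icc 0 1)) (hg0 : ∀ x ∈ Icc (0 : ℝ) 1, 0 < g x) :
    Tendsto (fun n : ℕ => log (laplaceSum f g n) / n) atTop (𝓝 (sSup (f '' Icc 0 1))) := by
  have hne : (Icc (0 : ℝ) 1).Nonempty := nonempty_Icc.2 zero_le_one
  obtain ⟨x₁, hx₁, hfmax⟩ := isCompact_Icc.exists_isMaxOn hne hf
  obtain ⟨xm, hxm, hgmin⟩ := isCompact_Icc.exists_isMinOn hne hg
  obtain ⟨xC, hxC, hgmax⟩ := isCompact_Icc.exists_isMaxOn hne hg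
  rw [IsGreatest.csSup_eq ⟨mem_image_of_mem f hx₁, forall_mem_image.2 hfmax⟩]
  have hfloor (n : ℕ) : ⌊x₁ * n⌋₊ ≤ n :=
    Nat.floor_le_of_le (mul_le_of_le_one_left n.cast_nonneg hx₁.2)
  have hgrid : Tendsto (fun n : ℕ => (⌊x₁ * n⌋₊ : ℝ) / n) atTop (𝓝[Icc 0 1] x₁) :=
    tendsto_nhdsWithin_iff.2 ⟨(tendsto_nat_floor_mul_div_atTop hx₁.1).comp
      tendsto_natCast_atTop_atTop, Eventually.of_forall fun n => natCast_div_mem_Icc (hfloor n)⟩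
  have hlower : Tendsto (fun n : ℕ => f (⌊x₁ * n⌋₊ / n) + log (g xm) / n) atTop (𝓝 (f x₁)) := by
    simpa using ((hf x₁ hx₁).tendsto.comp hgrid).add (tendsto_const_div_atTop_nhds_zero_nat _)
  have hupper : Tendsto (fun n : ℕ => f x₁ + log ((n + 1) * g xC) / n) atTop (𝓝 (f x₁)) := by
    simpa using tendsto_const_nhds.add (tendsto_log_natCast_add_one_mul_div (hg0 xC hxC))
  refine tendsto_of_tendsto_of_tendsto_of_le_of_le' hlower hupper ?_ ?_ <;>
    filter_upwards [eventually_gt_atTop 0] with n hn <;>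
    rw [add_div' _ _ _ (by positivity), div_le_div_iff_of_pos_right (by positivity)]
  · linarith [le_log_laplaceSum (f := f) (hg0 xm hxm) hgmin (hfloor n)]
  · linarith [log_laplaceSum_le hfmax (fun x hx => ⟨hg0 x hx, hgmax hx⟩) n]

theorem tendsto_log_laplaceSum_div {f g : ℝ → ℝ} (hf : ContinuousOn f (Icc 0 1))
    (hg : ContinuousOn g (Icc 0 1)) (hg0 : ∀ x ∈ Icc (0 : ℝ) 1, g x ≠ 0) :
    Tendsto (fun n : ℕ => log (laplaceSum f g n) / n) atTop (𝓝 (sSup (f '' Icc 0 1))) := by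
  simp_rw [log_laplaceSum_abs hg hg0]
  exact tendsto_log_laplaceSum_div_of_pos hf hg.abs fun x hx => abs_pos.2 (hg0 x hx)

theorem generating_function_growth_rate_general (S L : ℝ → ℝ)
    (hS : ContinuousOn S (Set.Icc 0 1))
    (hL : DifferentiableOn ℝ L (Set.Icc 0 1))
    (hL0 : ∀ x ∈ Set.Icc (0 : ℝ) 1, L x ≠ 0) :
    ∀ z : ℝ, 0 < z →
      Tendsto (fun n : ℕ => Real.log (genFun S L z n) / (n : ℝ)) atTop
        (nhds (sSup ((fun x => -S x + x * Real.log z) '' Set.Icc (0 : ℝ) 1))) := by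
  intro z hz
  simp_rw [genFun_eq_laplaceSum hz]
  exact tendsto_log_laplaceSum_div (hS.neg.add (continuousOn_id.mul continuousOn_const))
    hL.continuousOn hL0

theorem generating_function_growth_rate (S L : ℝ → ℝ) (x₀ : ℝ)
    (hS : ContinuousOn S (Set.Icc 0 1))
    (hS3 : ContDiffOn ℝ 3 S (Set.Ioo 0 1))
    (hx₀ : x₀ ∈ Set.Ioo (0 : ℝ) 1)
    (hmin : ∀ x ∈ Set.Icc (0 : ℝ) 1, x ≠ x₀ → S x₀ < S x)
    (hS'' : ∀ x ∈ Set.Ioo (0 : ℝ) 1, 0 < iteratedDeriv 2 S x)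
    (hL : DifferentiableOn ℝ L (Set.Icc 0 1))
    (hL0 : ∀ x ∈ Set.Icc (0 : ℝ) 1, L x ≠ 0) :
    ∀ z : ℝ, 0 < z →
      Tendsto (fun n : ℕ => Real.log (genFun S L z n) / (n : ℝ)) atTop
        (nhds (sSup ((fun x => -S x + x * Real.log z) '' Set.Icc (0 : ℝ) 1))) :=
  generating_function_growth_rate_general S L hS hL hL0
end
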